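/- arXiv:2503.01815 — 2 statements merged into one kernel-verified Lean document; each statement's English description precedes it below -/
import Mathlib

section
/- Let K be a field of characteristic ≠ 2. There exist matrices a, b in SL(2,K) with ab = -ba if and only if -1 is a sum of two squares in K. -/
/-- If `A*B = -(B*A)` with `B` invertible (det 1), then `A` has trace zero. -/
lemma aux_trace_zero {K : Type*} [Field K] (hchar : (2 : K) ≠ 0)
    (A B : Matrix (Fin 2) (Fin 2) K) (hdB : B.det = 1)
    (hab : A * B = -(B * A)) : A.trace = 0 := by
  have hu : IsUnit B.det := by rw [hdB]; exact isUnit_one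
  have hBB : B * B⁻¹ = 1 := Matrix.mul_nonsing_inv B hu
  have hBB' : B⁻¹ * B = 1 := Matrix.nonsing_inv_mul B hu
  have h1 : A = -(B * A * B⁻¹) := by
    calc A = A * (B * B⁻¹) := by rw [hBB, mul_one]
    _ = (A * B) * B⁻¹ := by rw [mul_assoc]
    _ = -(B * A) * B⁻¹ := by rw [hab]
    _ = -(B * A * B⁻¹) := by rw [neg_mul]
  have h2 : A.trace = -A.trace := by
    conv_lhs => rw [h1]
    rw [Matrix.trace_neg, Matrix.trace_mul_cycle, hBB', one_mul]
  have h3 : (2 : K) * A.trace = 0 := by linear_combination h2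
  rcases mul_eq_zero.mp h3 with h | h
  · exact absurd h hchar
  · exact h

/-- Let K be a field of characteristic ≠ 2. There exist matrices
a, b in SL(2,K) with ab = -ba iff -1 is a sum of two squares in K. -/
theorem stmt0 (K : Type*) [Field K] (hchar : (2 : K) ≠ 0) :
    (∃ a b : Matrix.SpecialLinearGroup (Fin 2) K,
        (a : Matrix (Fin 2) (Fin 2) K) * (b : Matrix (Fin 2) (Fin 2) K) =
          -((b : Matrix (Fin 2) (Fin 2) K) * (a : Matrix (Fin 2) (Fin 2) K))) ↔
      ∃ γ δ : K, γ ^ 2 + δ ^ 2 = -1 := by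
  constructor
  · rintro ⟨a, b, hab⟩
    set A : Matrix (Fin 2) (Fin 2) K := (a : Matrix (Fin 2) (Fin 2) K) with hA
    set B : Matrix (Fin 2) (Fin 2) K := (b : Matrix (Fin 2) (Fin 2) K) with hB
    have hdA : A.det = 1 := a.prop
    have hdB : B.det = 1 := b.prop
    have hba : B * A = -(A * B) := by rw [hab, neg_neg]
    have htA : A.trace = 0 := aux_trace_zero hchar A B hdB hab
    have htB : B.trace = 0 := aux_trace_zero hchar B A hdA hba
    rw [Matrix.trace_fin_two] at htA htB
    rw [Matrix.det_fin_two] at hdA hdB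
    have h00 : (A * B) 0 0 = (-(B * A)) 0 0 := by rw [hab]
    simp only [Matrix.mul_apply, Fin.sum_univ_two, Matrix.neg_apply] at h00
    set x := A 0 0 with hx
    set y := A 0 1 with hy
    set z := A 1 0 with hz
    set w := A 1 1 with hw
    set p := B 0 0 with hp
    set q := B 0 1 with hq
    set r := B 1 0 with hr
    set t := B 1 1 with ht
    have hw' : w = -x := by linear_combination htA
    have ht' : t = -p := by linear_combination htB
    -- key: -1 is a sum of three squares
    have h1 : x ^ 2 + y * z = -1 := by linear_combination -hdA + x * hw'
    have h2 : p ^ 2 + q * r = -1 := by linear_combination -hdB + p * ht'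
    have h3 : 2 * (x * p) + y * r + q * z = 0 := by linear_combination h00
    set s := x * p + y * r with hs
    have key : x ^ 2 + p ^ 2 + s ^ 2 = -1 := by
      rw [hs]
      linear_combination (1 + p ^ 2) * h1 - (y * z) * h2 + (y * r) * h3
    by_cases hC : 1 + s ^ 2 = 0
    · exact ⟨s, 0, by linear_combination hC⟩
    · refine ⟨(x + p * s) / (1 + s ^ 2), (p - x * s) / (1 + s ^ 2), ?_⟩
      field_simp
      linear_combination (1 + s ^ 2) * key
  · rintro ⟨γ, δ, hγδ⟩
    refine ⟨⟨!![0, 1; -1, 0], by simp [Matrix.det_fin_two_of]⟩,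
      ⟨!![γ, δ; δ, -γ], by simp [Matrix.det_fin_two_of]; linear_combination -hγδ⟩, ?_⟩
    simp only [Matrix.SpecialLinearGroup.coe_mk]
    ext i j
    fin_cases i <;> fin_cases j <;>
      simp [Matrix.mul_apply, Fin.sum_univ_two]
end

section
/- Let K be a field of characteristic ≠ 2 of Stufe exactly 2 (i.e., -1 is a sum of two squares but not a square). Then there exist A, B ∈ SL(2,K) with AB = -BA, all of A₂₁, B₂₁, (AB)₂₁, (BA)₂₁ nonzero, and w(A,B) ≠ w(B,A), where w(A,B) = ⟨-A₂₁(AB)₂₁B₂₁⟩ ∈ W(K). Hence the Witt cocycle on PSL(2,K) is not equicommutative. -/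
/-!
For `γ² + δ² = -1`, the matrices `A = !![0, 1; -1, 0]` and `B = !![γ, δ; δ, -γ]` of `SL(2, K)`
anticommute, and `w(A, B) = ⟨-γδ⟩`, `w(B, A) = ⟨γδ⟩`. These classes differ when `-1` is not a
square: then `-1` is nonzero in the `𝔽₂`-vector space `Kˣ / Kˣ²`, so some functional on it, i.e.
some quadratic character `χ` of `Kˣ`, has `χ(-1) = -1`. Witt's relations hold for the values of
`χ` read in `ℤ/4`, so `⟨a⟩ ↦ χ(a)` is a ring map `W(K) → ℤ/4`, and it sends `⟨-t⟩` to `-χ(t) ≠ χ(t)`.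
-/

open MvPolynomial in
/-- Witt's presentation of the Witt ring of a field `K` of characteristic ≠ 2:
generators `⟨a⟩` for `a ∈ K` (with `⟨0⟩ := 0` as a junk value), and the relations
`⟨1⟩ = 1`, `⟨a⟩⟨b⟩ = ⟨ab⟩`, `⟨ab²⟩ = ⟨a⟩`, `⟨a⟩ + ⟨-a⟩ = 0`, and the Witt relation
`⟨a⟩ + ⟨b⟩ = ⟨a+b⟩(1 + ⟨ab⟩)` for `a + b ≠ 0`. -/
inductive WittRel (K : Type) [Field K] :
    MvPolynomial K ℤ → MvPolynomial K ℤ → Prop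
  | zero : WittRel K (X (0 : K)) 0
  | one : WittRel K (X (1 : K)) 1
  | mul (a b : K) : WittRel K (X a * X b) (X (a * b))
  | sq (a b : K) (hb : b ≠ 0) : WittRel K (X (a * b ^ 2)) (X a)
  | neg (a : K) (ha : a ≠ 0) : WittRel K (X a + X (-a)) 0
  | add (a b : K) (ha : a ≠ 0) (hb : b ≠ 0) (hab : a + b ≠ 0) :
      WittRel K (X a + X b) (X (a + b) * (1 + X (a * b)))

/-- The Witt ring `W(K)` of a field of characteristic ≠ 2, via Witt's presentation. -/
abbrev WittRing (K : Type) [Field K] := RingQuot (WittRel K)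

/-- The class `⟨a⟩ ∈ W(K)` of the rank-one form with value `a` (junk value `0` at `a = 0`). -/
noncomputable def WittGen (K : Type) [Field K] (a : K) : WittRing K :=
  RingQuot.mkRingHom (WittRel K) (MvPolynomial.X a)

/-- The fundamental ideal `I(K)` of even-dimensional forms, generated by the
binary forms `⟨1, a⟩ = 1 + ⟨a⟩`. -/
noncomputable def fundamentalIdeal (K : Type) [Field K] : Ideal (WittRing K) :=
  Ideal.span {x | ∃ a : K, a ≠ 0 ∧ x = 1 + WittGen K a}

theorem exists_monoidHom_intUnits_eq_neg_one {G : Type*} [CommGroup G] {g : G}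
    (hg : ¬ IsSquare g) : ∃ χ : G →* ℤˣ, χ g = -1 := by
  set H := (powMonoidHom 2 : G →* G).range
  let _ : Module (ZMod 2) (Additive (G ⧸ H)) := AddCommGroup.zmodModule fun x => by
    induction x using QuotientGroup.induction_on with
    | H y => exact (QuotientGroup.eq_one_iff _).mpr ⟨y, rfl⟩
  have hg' : Additive.ofMul (g : G ⧸ H) ≠ 0 := fun h => hg <| by
    obtain ⟨y, hy⟩ := (QuotientGroup.eq_one_iff g).mp h
    exact ⟨y, by rw [← hy, powMonoidHom_apply, sq]⟩
  obtain ⟨φ, hφ⟩ := Module.Projective.exists_dual_eq_one (ZMod 2) hg'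
  let ψ := LinearMap.toSpanSingleton (ZMod 2) _ (Additive.ofMul (-1 : ℤˣ)) ∘ₗ φ
  refine ⟨(MonoidHom.toAdditive.symm ψ.toAddMonoidHom).comp (QuotientGroup.mk' H), ?_⟩
  simp [ψ, hφ]

theorem MulChar.isQuadratic_ofUnitHom_intUnits {R : Type*} [CommMonoid R] (χ : Rˣ →* ℤˣ) :
    (MulChar.ofUnitHom χ).IsQuadratic := by
  intro a
  by_cases ha : IsUnit a
  · obtain ⟨u, rfl⟩ := ha
    rw [MulChar.ofUnitHom_coe]
    rcases Int.units_eq_one_or (χ u) with h | h <;> simp [h]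
  · exact Or.inl (MulChar.map_nonunit _ ha)

theorem MulChar.exists_isQuadratic_map_neg_one_eq_neg_one {R : Type*} [CommRing R]
    (h : ¬ IsSquare (-1 : Rˣ)) : ∃ χ : MulChar R ℤ, χ.IsQuadratic ∧ χ (-1) = -1 := by
  obtain ⟨χ, hχ⟩ := exists_monoidHom_intUnits_eq_neg_one h
  refine ⟨MulChar.ofUnitHom χ, isQuadratic_ofUnitHom_intUnits χ, ?_⟩
  simpa [hχ] using MulChar.ofUnitHom_coe χ (-1)

theorem MulChar.IsQuadratic.eq_one_or_eq_neg_one {R R' : Type*} [CommMonoid R] [CommRing R']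
    [Nontrivial R'] {χ : MulChar R R'} (hχ : χ.IsQuadratic) {a : R} (ha : IsUnit a) :
    χ a = 1 ∨ χ a = -1 :=
  (hχ a).resolve_left (MulChar.apply_ne_zero_iff.mpr ha)

-- Signs satisfy Witt's relation `⟨a⟩ + ⟨b⟩ = ⟨a + b⟩(1 + ⟨ab⟩)` modulo 4 because `2 = -2` there.
theorem zmodFour_add_eq_mul_one_add_mul {u v w : ZMod 4} (hu : u = 1 ∨ u = -1)
    (hv : v = 1 ∨ v = -1) (hw : w = 1 ∨ w = -1) : u + v = w * (1 + u * v) := by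
  rcases hu with rfl | rfl <;> rcases hv with rfl | rfl <;> rcases hw with rfl | rfl <;> decide

namespace WittRing

variable {K : Type} [Field K]

open MvPolynomial in
noncomputable def liftQuadraticChar (χ : MulChar K (ZMod 4)) (hχ : χ.IsQuadratic)
    (hχ₁ : χ (-1) = -1) : WittRing K →+* ZMod 4 :=
  RingQuot.lift ⟨eval₂Hom (Int.castRingHom _) χ, fun x y h => by
    have : Fact (1 < 4) := ⟨by norm_num⟩
    have sign := fun {a : K} (ha : a ≠ 0) => hχ.eq_one_or_eq_neg_one ha.isUnit
    induction h with
    | zero => simpa using χ.map_zero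
    | one => simp
    | mul a b => simp
    | sq a b hb => rcases sign hb with h | h <;> simp [h]
    | neg a _ =>
      have : χ (-a) = -χ a := by rw [neg_eq_neg_one_mul, map_mul, hχ₁, neg_one_mul]
      simp [this]
    | add a b ha hb hab =>
      simpa using zmodFour_add_eq_mul_one_add_mul (sign ha) (sign hb) (sign hab)⟩

@[simp]
theorem liftQuadraticChar_wittGen (χ : MulChar K (ZMod 4)) (hχ : χ.IsQuadratic)
    (hχ₁ : χ (-1) = -1) (a : K) : liftQuadraticChar χ hχ hχ₁ (WittGen K a) = χ a := by
  simp [liftQuadraticChar, WittGen, RingQuot.lift_mkRingHom_apply]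

theorem wittGen_neg_ne_self (h : ¬ IsSquare (-1 : K)) {t : K} (ht : t ≠ 0) :
    WittGen K (-t) ≠ WittGen K t := by
  obtain ⟨χ, hχ, hχ₁⟩ := MulChar.exists_isQuadratic_map_neg_one_eq_neg_one (R := K)
    fun hu => h (by simpa using hu.map (Units.coeHom K))
  set χ₄ := χ.ringHomComp (Int.castRingHom (ZMod 4))
  have hχ₄ : χ₄ (-1) = -1 := by simp [χ₄, MulChar.ringHomComp_apply, hχ₁]
  have hχ₄_neg : χ₄ (-t) ≠ χ₄ t := by
    rw [neg_eq_neg_one_mul, map_mul, hχ₄]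
    rcases hχ.eq_one_or_eq_neg_one ht.isUnit with h | h <;>
      simp only [χ₄, MulChar.ringHomComp_apply, h] <;> decide
  intro heq
  exact hχ₄_neg (by simpa using congrArg (liftQuadraticChar χ₄ (hχ.comp _) hχ₄) heq)

end WittRing

open scoped MatrixGroups

namespace Matrix.SpecialLinearGroup

variable {R : Type*} [CommRing R]

def quarterTurn : SL(2, R) := ⟨!![0, 1; -1, 0], by simp [det_fin_two_of]⟩

def ofSqAddSqEqNegOne {γ δ : R} (h : γ ^ 2 + δ ^ 2 = -1) : SL(2, R) :=
  ⟨!![γ, δ; δ, -γ], by rw [det_fin_two_of]; linear_combination -h⟩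

@[simp]
theorem coe_quarterTurn :
    ((quarterTurn : SL(2, R)) : Matrix (Fin 2) (Fin 2) R) = !![0, 1; -1, 0] :=
  rfl

@[simp]
theorem coe_ofSqAddSqEqNegOne {γ δ : R} (h : γ ^ 2 + δ ^ 2 = -1) :
    (ofSqAddSqEqNegOne h : Matrix (Fin 2) (Fin 2) R) = !![γ, δ; δ, -γ] := rfl

theorem quarterTurn_mul_ofSqAddSqEqNegOne {γ δ : R} (h : γ ^ 2 + δ ^ 2 = -1) :
    ((quarterTurn : SL(2, R)) : Matrix (Fin 2) (Fin 2) R) * ofSqAddSqEqNegOne h =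
      -((ofSqAddSqEqNegOne h : Matrix (Fin 2) (Fin 2) R) * (quarterTurn : SL(2, R))) := by
  simp

end Matrix.SpecialLinearGroup

theorem stmt15_general (K : Type) [Field K]
    (hstufe2 : ∃ γ δ : K, γ ^ 2 + δ ^ 2 = -1)
    (hnsq : ¬ ∃ a : K, a ^ 2 = -1) :
    ∃ A B : Matrix.SpecialLinearGroup (Fin 2) K,
      (A : Matrix (Fin 2) (Fin 2) K) * (B : Matrix (Fin 2) (Fin 2) K) =
        -((B : Matrix (Fin 2) (Fin 2) K) * (A : Matrix (Fin 2) (Fin 2) K)) ∧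
      (A : Matrix (Fin 2) (Fin 2) K) 1 0 ≠ 0 ∧
      (B : Matrix (Fin 2) (Fin 2) K) 1 0 ≠ 0 ∧
      ((A * B : Matrix.SpecialLinearGroup (Fin 2) K) : Matrix (Fin 2) (Fin 2) K) 1 0 ≠ 0 ∧
      ((B * A : Matrix.SpecialLinearGroup (Fin 2) K) : Matrix (Fin 2) (Fin 2) K) 1 0 ≠ 0 ∧
      WittGen K (-((A : Matrix (Fin 2) (Fin 2) K) 1 0 *
          ((A * B : Matrix.SpecialLinearGroup (Fin 2) K) : Matrix (Fin 2) (Fin 2) K) 1 0 *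
          (B : Matrix (Fin 2) (Fin 2) K) 1 0)) ≠
        WittGen K (-((B : Matrix (Fin 2) (Fin 2) K) 1 0 *
          ((B * A : Matrix.SpecialLinearGroup (Fin 2) K) : Matrix (Fin 2) (Fin 2) K) 1 0 *
          (A : Matrix (Fin 2) (Fin 2) K) 1 0)) := by
  obtain ⟨γ, δ, h⟩ := hstufe2
  have hγ : γ ≠ 0 := fun h0 => hnsq ⟨δ, by simpa [h0] using h⟩
  have hδ : δ ≠ 0 := fun h0 => hnsq ⟨γ, by simpa [h0] using h⟩
  have hnotSq : ¬ IsSquare (-1 : K) := fun ⟨a, ha⟩ => hnsq ⟨a, by rw [sq, ← ha]⟩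
  open Matrix.SpecialLinearGroup in
  refine ⟨quarterTurn, ofSqAddSqEqNegOne h, quarterTurn_mul_ofSqAddSqEqNegOne h,
    by simp, by simpa, by simpa, by simpa, ?_⟩
  simpa [mul_comm δ γ] using WittRing.wittGen_neg_ne_self hnotSq (mul_ne_zero hγ hδ)

/-- If K has Stufe exactly 2, there are anti-commuting
A, B ∈ SL(2,K) (with relevant 21-entries nonzero) such that
w(A,B) ≠ w(B,A) in W(K); hence the Witt cocycle on PSL(2,K) is not
equicommutative. -/
theorem stmt15 (K : Type) [Field K] (hchar : (2 : K) ≠ 0)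
    (hstufe2 : ∃ γ δ : K, γ ^ 2 + δ ^ 2 = -1)
    (hnsq : ¬ ∃ a : K, a ^ 2 = -1) :
    ∃ A B : Matrix.SpecialLinearGroup (Fin 2) K,
      (A : Matrix (Fin 2) (Fin 2) K) * (B : Matrix (Fin 2) (Fin 2) K) =
        -((B : Matrix (Fin 2) (Fin 2) K) * (A : Matrix (Fin 2) (Fin 2) K)) ∧
      (A : Matrix (Fin 2) (Fin 2) K) 1 0 ≠ 0 ∧
      (B : Matrix (Fin 2) (Fin 2) K) 1 0 ≠ 0 ∧
      ((A * B : Matrix.SpecialLinearGroup (Fin 2) K) : Matrix (Fin 2) (Fin 2) K) 1 0 ≠ 0 ∧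
      ((B * A : Matrix.SpecialLinearGroup (Fin 2) K) : Matrix (Fin 2) (Fin 2) K) 1 0 ≠ 0 ∧
      WittGen K (-((A : Matrix (Fin 2) (Fin 2) K) 1 0 *
          ((A * B : Matrix.SpecialLinearGroup (Fin 2) K) : Matrix (Fin 2) (Fin 2) K) 1 0 *
          (B : Matrix (Fin 2) (Fin 2) K) 1 0)) ≠
        WittGen K (-((B : Matrix (Fin 2) (Fin 2) K) 1 0 *
          ((B * A : Matrix.SpecialLinearGroup (Fin 2) K) : Matrix (Fin 2) (Fin 2) K) 1 0 *
          (A : Matrix (Fin 2) (Fin 2) K) 1 0)) :=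
  stmt15_general K hstufe2 hnsq
end
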